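/- arXiv:2009.07842 — 2 statements merged into one kernel-verified Lean document; each statement's English description precedes it below -/
import Mathlib

section
/- The set of balanced policies of F(m,k), ordered by the dominance relation (x·x ⪰ y·y iff V^{x·x}(s_i) ≥ V^{y·y}(s_i) for all i), is a total order, and its maximal element is the all-(k−1) policy. -/
private def S (m : ℕ) (k : ℕ) (x : ℕ → ℕ) (i : ℕ) : ℕ :=
  ∑ u ∈ Finset.range i, x u * k ^ (m - 1 - u)

private lemma S_mono (m k : ℕ) (x : ℕ → ℕ) {i j : ℕ} (h : i ≤ j) :
    S m k x i ≤ S m k x j :=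
  Finset.sum_le_sum_of_subset (Finset.range_subset_range.2 h)

private lemma S_split (m k : ℕ) (x : ℕ → ℕ) {i j : ℕ} (h : i ≤ j) :
    S m k x j = S m k x i + ∑ u ∈ Finset.Ico i j, x u * k ^ (m - 1 - u) := by
  simp only [S, Finset.range_eq_Ico]
  rw [← Finset.sum_Ico_consecutive _ (Nat.zero_le i) h]

private lemma geom (m k : ℕ) (hk : 1 ≤ k) : ∀ i j, i ≤ j → j ≤ m →
    (∑ u ∈ Finset.Ico i j, (k - 1) * k ^ (m - 1 - u)) + k ^ (m - j) = k ^ (m - i) := by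
  intro i j hij hjm
  induction j with
  | zero =>
    have : i = 0 := by omega
    subst this; simp
  | succ n ih =>
    rcases Nat.lt_or_ge i (n+1) with h | h
    · have hin : i ≤ n := by omega
      rw [← ih hin (by omega), Finset.sum_Ico_succ_top hin]
      have h1 : m - (n+1) + 1 = m - n := by omega
      have h2 : m - 1 - n = m - (n+1) := by omega
      have h3 : (k-1) * k ^ (m-1-n) + k ^ (m-(n+1)) = k ^ (m - n) := by
        rw [h2, ← h1, pow_succ]
        obtain ⟨kk, rfl⟩ := Nat.exists_eq_succ_of_ne_zero (by omega : k ≠ 0)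
        simp [Nat.succ_sub_one]; ring
      omega
    · have : i = n + 1 := by omega
      subst this; simp

private lemma S_bound (m k : ℕ) (hk : 1 ≤ k) (x : ℕ → ℕ) (hx : ∀ u < m, x u < k)
    {i j : ℕ} (hij : i ≤ j) (hjm : j ≤ m) :
    S m k x j + k ^ (m - j) ≤ S m k x i + k ^ (m - i) := by
  rw [S_split m k x hij, ← geom m k hk i j hij hjm]
  have : (∑ u ∈ Finset.Ico i j, x u * k ^ (m - 1 - u)) ≤
      ∑ u ∈ Finset.Ico i j, (k - 1) * k ^ (m - 1 - u) := by
    apply Finset.sum_le_sum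
    intro u hu
    have hu' := (Finset.mem_Ico.1 hu).2
    have := hx u (by omega)
    exact Nat.mul_le_mul_right _ (by omega)
  omega

private lemma S_dvd (m k : ℕ) (x : ℕ → ℕ) {i : ℕ} (hi : i ≤ m) :
    k ^ (m - i) ∣ S m k x i := by
  apply Finset.dvd_sum
  intro u hu
  have hu' := Finset.mem_range.1 hu
  exact Dvd.dvd.mul_left (pow_dvd_pow k (by omega)) _

private lemma S_step (m k : ℕ) (hk : 1 ≤ k) (x y : ℕ → ℕ)
    (hx : ∀ u < m, x u < k) {i : ℕ} (hi : i ≤ m) (hlt : S m k x i < S m k y i) :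
    ∀ j, i ≤ j → j ≤ m → S m k x j ≤ S m k y j := by
  intro j hij hjm
  have hd : k ^ (m - i) ∣ S m k y i - S m k x i :=
    Nat.dvd_sub (S_dvd m k y hi) (S_dvd m k x hi)
  have hle : k ^ (m - i) ≤ S m k y i - S m k x i :=
    Nat.le_of_dvd (by omega) hd
  have h1 : S m k x i + k ^ (m - i) ≤ S m k y i := by omega
  have h2 := S_bound m k hk x hx hij hjm
  have h3 := S_mono m k y hij
  omega

/-- The dominance relation on balanced policies of `F(m,k)` is total, and the
all-`(k-1)` policy is the maximal element. `x ⪰ y` iff for every `i ≤ m`,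
`Σ_{u=1}^i x_u k^{m-u} ≥ Σ_{u=1}^i y_u k^{m-u}` (indices `0, …, m-1`). -/
theorem stmt_7 (k m : ℕ) (hk : 2 ≤ k) (hm : 1 ≤ m) :
    (∀ x y : ℕ → ℕ, (∀ u < m, x u < k) → (∀ u < m, y u < k) →
      (∀ i ≤ m, (∑ u ∈ Finset.range i, y u * k ^ (m - 1 - u)) ≤
          ∑ u ∈ Finset.range i, x u * k ^ (m - 1 - u)) ∨
      (∀ i ≤ m, (∑ u ∈ Finset.range i, x u * k ^ (m - 1 - u)) ≤
          ∑ u ∈ Finset.range i, y u * k ^ (m - 1 - u))) ∧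
    (∀ x : ℕ → ℕ, (∀ u < m, x u < k) →
      ∀ i ≤ m, (∑ u ∈ Finset.range i, x u * k ^ (m - 1 - u)) ≤
        ∑ u ∈ Finset.range i, (k - 1) * k ^ (m - 1 - u)) := by
  have hk1 : 1 ≤ k := by omega
  constructor
  · intro x y hx hy
    by_contra hcon
    push_neg at hcon
    obtain ⟨⟨i, him, hi⟩, j, hjm, hj⟩ := hcon
    change S m k x i < S m k y i at hi
    change S m k y j < S m k x j at hj
    rcases le_or_gt i j with h | h
    · exact absurd (S_step m k hk1 x y hx him hi j h hjm) (by omega)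
    · exact absurd (S_step m k hk1 y x hy hjm hj i (by omega) him) (by omega)
  · intro x hx i hi
    apply Finset.sum_le_sum
    intro u hu
    have := hx u (lt_of_lt_of_le (Finset.mem_range.1 hu) hi)
    exact Nat.mul_le_mul_right _ (by omega)
end

section
/- In G(n,k), the policy π_{ij} = 0^{i−1} j (k−1)^{n−i} has exactly one improvable state, namely s_i, and its set of improving actions is {j+1, j+2, …, k−1}. That is, Q^{π_{ij}}(s_i, a) > V^{π_{ij}}(s_i) iff a > j, and Q^{π_{ij}}(s_u, a) ≤ V^{π_{ij}}(s_u) for all u ≠ i and all actions a. -/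
/-- Transition probability to the terminal sink under action `j` in `G(n,k)`. -/
def Gp (k j : ℕ) : ℚ := 1 / 2 + ((k : ℚ) - (j : ℚ)) / (2 * k)

/-- Value of the policy `π_{ij} = 0^{i-1} j (k-1)^{n-i}` at state `s_u` of `G(n,k)`
(`0` for `u > i`, in particular at the terminal index `n+1`). -/
def Gval (k i j : ℕ) (u : ℕ) : ℚ :=
  if u < i then -(2 : ℚ) ^ u else if u = i then -(2 : ℚ) ^ i * Gp k j else 0

/-- Action value `Q^{π_{ij}}(s_u, a)` in `G(n,k)`: action `0` terminates with reward
`-2^u`, action `k-1` moves to `s_{u+1}`, and action `a ∈ {1,…,k-2}` behaves like `0`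
with probability `Gp k a` and like `k-1` otherwise. -/
def Gq (k i j : ℕ) (u a : ℕ) : ℚ :=
  if a = 0 then -(2 : ℚ) ^ u
  else if a = k - 1 then Gval k i j (u + 1)
  else Gp k a * (-(2 : ℚ) ^ u) + (1 - Gp k a) * Gval k i j (u + 1)

lemma Gp_eq (k a : ℕ) (hk : 2 ≤ k) : Gp k a = (2 * (k : ℚ) - a) / (2 * k) := by
  have hk0 : (k : ℚ) ≠ 0 := by
    have : (0:ℚ) < k := by exact_mod_cast Nat.lt_of_lt_of_le (by norm_num) hk
    linarith
  unfold Gp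
  field_simp
  ring

/-- `π_{ij}` has exactly one improvable state, `s_i`, with improving actions
`{j+1, …, k-1}`: `Q(s_i, a) > V(s_i)` iff `a > j`, and `Q(s_u, a) ≤ V(s_u)`
for every `u ≠ i` and every action `a`. -/
theorem stmt_12 (n k i j : ℕ) (hk : 2 ≤ k) (hi1 : 1 ≤ i) (hin : i ≤ n)
    (hj : j ≤ k - 2) :
    (∀ a < k, Gval k i j i < Gq k i j i a ↔ j < a) ∧
      (∀ u, 1 ≤ u → u ≤ n → u ≠ i → ∀ a < k, Gq k i j u a ≤ Gval k i j u) := by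
  have hkQ : (2:ℚ) ≤ (k:ℚ) := by exact_mod_cast hk
  have h2k : (0:ℚ) < 2 * k := by linarith
  have hjk : j + 2 ≤ k := by omega
  have hjQ : (j:ℚ) + 2 ≤ (k:ℚ) := by exact_mod_cast hjk
  have hGp_pos : ∀ a : ℕ, a < k → 0 < Gp k a := by
    intro a ha
    have haQ : (a:ℚ) < k := by exact_mod_cast ha
    rw [Gp_eq k a hk]
    exact div_pos (by linarith) h2k
  have hGp_le_one : ∀ a : ℕ, Gp k a ≤ 1 := by
    intro a
    rw [Gp_eq k a hk, div_le_one h2k]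
    have : (0:ℚ) ≤ a := Nat.cast_nonneg a
    linarith
  have hGp_half : ∀ a : ℕ, a < k → (1:ℚ)/2 ≤ Gp k a := by
    intro a ha
    have haQ : (a:ℚ) < k := by exact_mod_cast ha
    rw [Gp_eq k a hk, le_div_iff₀ h2k]
    linarith
  constructor
  · -- improvable state s_i
    intro a ha
    by_cases ha0 : a = 0
    · subst ha0
      simp only [Gq, Gval, if_neg (lt_irrefl i), eq_self_iff_true, if_true]
      constructor
      · intro h
        exfalso
        have h1 : Gp k j ≤ 1 := hGp_le_one j
        have h2 : (0:ℚ) < 2 ^ i := by positivity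
        nlinarith
      · intro h; omega
    · by_cases hak : a = k - 1
      · subst hak
        have hne : k - 1 ≠ 0 := by omega
        simp only [Gq, if_neg hne, if_pos rfl, Gval, if_neg (lt_irrefl i),
          eq_self_iff_true, if_true, if_neg (by omega : ¬ i + 1 < i), if_neg (by omega : ¬ i + 1 = i)]
        constructor
        · intro _; omega
        · intro _
          have h1 : 0 < Gp k j := hGp_pos j (by omega)
          have h2 : (0:ℚ) < 2 ^ i := by positivity
          nlinarith
      · -- middle action
        simp only [Gq, if_neg ha0, if_neg hak, Gval, if_neg (lt_irrefl i),
          eq_self_iff_true, if_true, if_neg (by omega : ¬ i + 1 < i), if_neg (by omega : ¬ i + 1 = i)]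
        have h2 : (0:ℚ) < 2 ^ i := by positivity
        rw [Gp_eq k a hk, Gp_eq k j hk]
        have hk0 : (k:ℚ) ≠ 0 := by linarith
        have hrew : (2*(k:ℚ)-a)/(2*k) * (-(2:ℚ)^i) + (1 - (2*(k:ℚ)-a)/(2*k)) * 0
            - (-(2:ℚ)^i * ((2*(k:ℚ)-j)/(2*k))) = (2:ℚ)^i * ((a:ℚ) - j) / (2*k) := by
          field_simp
          ring
        constructor
        · intro h
          have h' : 0 < (2:ℚ)^i * ((a:ℚ) - j) / (2*k) := by rw [← hrew]; linarith
          have hd : (0:ℚ) < (a:ℚ) - j := by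
            by_contra hc
            push_neg at hc
            have : (2:ℚ)^i * ((a:ℚ) - j) / (2*k) ≤ 0 := by
              apply div_nonpos_of_nonpos_of_nonneg ?_ (le_of_lt h2k)
              nlinarith
            linarith
          have : (j:ℚ) < a := by linarith
          exact_mod_cast this
        · intro h
          have haQ : (j:ℚ) < a := by exact_mod_cast h
          have h' : 0 < (2:ℚ)^i * ((a:ℚ) - j) / (2*k) :=
            div_pos (by nlinarith) h2k
          linarith [hrew]
  · -- non-improvable states
    intro u hu1 hun hui a ha
    have h2u : (0:ℚ) < 2 ^ u := by positivity
    rcases lt_or_gt_of_ne hui with hlt | hgt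
    · -- u < i
      have hvu : Gval k i j u = -(2:ℚ)^u := by simp [Gval, hlt]
      have hv1 : Gval k i j (u+1) ≤ -(2:ℚ)^u := by
        by_cases h1 : u + 1 < i
        · simp only [Gval, if_pos h1]
          have : (2:ℚ)^u ≤ 2^(u+1) := by
            apply pow_le_pow_right₀ (by norm_num) (by omega)
          linarith
        · have heq : u + 1 = i := by omega
          simp only [Gval, if_neg h1, if_pos heq]
          have hh : (1:ℚ)/2 ≤ Gp k j := hGp_half j (by omega)
          rw [← heq]
          have : (2:ℚ)^(u+1) = 2 * 2^u := by ring
          nlinarith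
      rw [hvu]
      by_cases ha0 : a = 0
      · simp [Gq, ha0]
      · by_cases hak : a = k - 1
        · simp only [Gq, if_neg ha0, if_pos hak]
          exact hv1
        · simp only [Gq, if_neg ha0, if_neg hak]
          have h1 : 0 < Gp k a := hGp_pos a ha
          have h2 : Gp k a ≤ 1 := hGp_le_one a
          nlinarith
    · -- u > i
      have hvu : Gval k i j u = 0 := by
        simp [Gval, if_neg (by omega : ¬ u < i), if_neg (by omega : ¬ u = i)]
      have hv1 : Gval k i j (u+1) = 0 := by
        simp [Gval, if_neg (by omega : ¬ u + 1 < i), if_neg (by omega : ¬ u + 1 = i)]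
      rw [hvu]
      by_cases ha0 : a = 0
      · simp only [Gq, if_pos ha0]; linarith
      · by_cases hak : a = k - 1
        · simp only [Gq, if_neg ha0, if_pos hak, hv1]; linarith
        · simp only [Gq, if_neg ha0, if_neg hak, hv1]
          have h1 : 0 < Gp k a := hGp_pos a ha
          nlinarith
end
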